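/- For all fixed nonnegative integers a and b, the quantity Δ₁(n,a,b) := 2 · ∑_{j=1}^{b} H_{n+1−j−a} · (b − 1 + κ_{j−1} + κ_{b−j} − κ_b) tends to 0 as n → ∞. -/

import Mathlib

open Finset Filter Topology

/-- The `n`-th harmonic number `H_n = ∑_{i=1}^n 1/i`. -/
noncomputable def H (n : ℕ) : ℝ := ∑ i ∈ Finset.range n, (1 : ℝ) / (i + 1)

/-- `κ_n = 2(n+1)H_n - 4n`, the mean number of key comparisons for QuickSort on `n` keys. -/
noncomputable def κ (n : ℕ) : ℝ := 2 * (n + 1) * H n - 4 * n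

/-!
The weights `b - 1 + κ_{j-1} + κ_{b-j} - κ_b`, `1 ≤ j ≤ b`, sum to zero: this is the QuickSort
recurrence `b κ_b = b(b-1) + 2 ∑_{i<b} κ_i`. Hence `Δ₁(n,a,b)/2` equals
`∑_j (H_{n+1-j-a} - H_{n+1-b-a}) · weight_j`, and each difference of harmonic numbers with a
fixed index shift tends to `0`.
-/

lemma H_succ (n : ℕ) : H (n + 1) = H n + 1 / (n + 1) := by
  simp [H, Finset.sum_range_succ]

lemma succ_mul_κ_succ (n : ℕ) : (n + 1) * κ (n + 1) = (n + 2) * κ n + 2 * n := by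
  simp only [κ, H_succ]
  push_cast
  field_simp
  ring

lemma two_mul_sum_range_κ (b : ℕ) :
    2 * ∑ i ∈ range b, κ i + b * ((b : ℝ) - 1) = b * κ b := by
  induction b with
  | zero => simp
  | succ b ih =>
    rw [sum_range_succ, Nat.cast_succ, succ_mul_κ_succ]
    linarith

lemma sum_Icc_κ_weight_eq_zero (b : ℕ) :
    ∑ j ∈ Icc 1 b, ((b : ℝ) - 1 + κ (j - 1) + κ (b - j) - κ b) = 0 := by
  have reindex : ∑ j ∈ Icc 1 b, ((b : ℝ) - 1 + κ (j - 1) + κ (b - j) - κ b)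
      = ∑ i ∈ range b, ((b : ℝ) - 1 + κ i + κ (b - 1 - i) - κ b) := by
    rw [← Finset.Ico_add_one_right_eq_Icc, Finset.sum_Ico_eq_sum_range]
    refine Finset.sum_congr rfl fun i _ => ?_
    rw [show 1 + i - 1 = i by omega, show b - (1 + i) = b - 1 - i by omega]
  have reflect : ∑ i ∈ range b, κ (b - 1 - i) = ∑ i ∈ range b, κ i :=
    Finset.sum_range_reflect κ b
  have recurrence := two_mul_sum_range_κ b
  rw [reindex]
  simp only [Finset.sum_sub_distrib, Finset.sum_add_distrib, reflect, Finset.sum_const,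
    Finset.card_range, nsmul_eq_mul]
  linarith

lemma tendsto_H_add_sub_H (d : ℕ) : Tendsto (fun n : ℕ => H (n + d) - H n) atTop (𝓝 0) := by
  induction d with
  | zero => simp
  | succ d ih =>
    have inv_tendsto : Tendsto (fun n : ℕ => 1 / ((n + d : ℕ) + 1 : ℝ)) atTop (𝓝 0) :=
      tendsto_one_div_add_atTop_nhds_zero_nat.comp (tendsto_add_atTop_nat d)
    simpa [← add_assoc, H_succ, add_sub_right_comm] using ih.add inv_tendsto

lemma tendsto_sum_mul_of_sum_eq_zero {ι α : Type*} {l : Filter α} {s : Finset ι} {c : ι → ℝ}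
    (hc : ∑ j ∈ s, c j = 0) {f : ι → α → ℝ} {g : α → ℝ}
    (hf : ∀ j ∈ s, Tendsto (fun x => f j x - g x) l (𝓝 0)) :
    Tendsto (fun x => ∑ j ∈ s, f j x * c j) l (𝓝 0) := by
  have key : Tendsto (fun x => ∑ j ∈ s, (f j x - g x) * c j) l (𝓝 0) := by
    simpa using tendsto_finsetSum s fun j hj => (hf j hj).mul_const (c j)
  refine key.congr fun x => ?_
  simp only [sub_mul, Finset.sum_sub_distrib, ← Finset.mul_sum, hc, mul_zero, sub_zero]

theorem delta1_tendsto_zero (a b : ℕ) :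
    Filter.Tendsto
      (fun n : ℕ => 2 * ∑ j ∈ Finset.Icc 1 b,
        H (n + 1 - j - a) * ((b : ℝ) - 1 + κ (j - 1) + κ (b - j) - κ b))
      Filter.atTop (𝓝 0) := by
  have shifted : ∀ j ∈ Icc 1 b,
      Tendsto (fun n : ℕ => H (n + 1 - j - a) - H (n + 1 - b - a)) atTop (𝓝 0) := by
    intro j hj
    rw [Finset.mem_Icc] at hj
    refine ((tendsto_H_add_sub_H (b - j)).comp (tendsto_sub_atTop_nat (a + b - 1))).congr' ?_
    filter_upwards [eventually_ge_atTop (a + b)] with n hn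
    rw [Function.comp_apply, show n - (a + b - 1) + (b - j) = n + 1 - j - a by omega,
      show n - (a + b - 1) = n + 1 - b - a by omega]
  simpa using (tendsto_sum_mul_of_sum_eq_zero (sum_Icc_κ_weight_eq_zero b) shifted).const_mul 2
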